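/- Let C = ⟨(b|0), (ℓ | fh + 2f)⟩ be a Z2Z4-additive cyclic code with β odd and fgh = x^β − 1 in Z4[x]. If g = 1 or g = x^s − 1 for some divisor s of β, then Φ(C) is a linear binary code. -/

import Mathlib

open Polynomial

noncomputable section

abbrev Z2 := ZMod 2
abbrev Z4 := ZMod 4

/-- Coefficientwise reduction modulo 2. -/
def ρ : Z4 →+* Z2 := ZMod.castHom (show 2 ∣ 4 by norm_num) Z2

/-- The quotient ring `R[x]/(x^n - 1)`. -/
abbrev QR (R : Type) [CommRing R] (n : ℕ) :=
  Polynomial R ⧸ Ideal.span {(Polynomial.X : Polynomial R) ^ n - 1}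

def pmk {R : Type} [CommRing R] (n : ℕ) (p : Polynomial R) : QR R n :=
  Ideal.Quotient.mk _ p

/-- `Z4[x]`-module structure on `Z2[x]/(x^n-1)` via reduction mod 2;
this gives the action `p ⋆ (b | a) = (p̃ b | p a)` on the product. -/
instance (n : ℕ) : Module (Polynomial Z4) (QR Z2 n) :=
  Module.compHom _ ((Ideal.Quotient.mk _).comp (mapRingHom ρ) : Polynomial Z4 →+* QR Z2 n)

def hat (u : Z4) : Z2 := ((u.val / 2 : ℕ) : Z2)

def til (u : Z4) : Z2 := ((u.val : ℕ) : Z2)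

/-- The Gray map `φ(u') = (û' | ũ' + û')`, with the second block of coordinates
indexed by the right summand. -/
def gray {ι : Type} (u : ι → Z4) : (ι ⊕ ι) → Z2 :=
  Sum.elim (fun i => hat (u i)) (fun i => til (u i) + hat (u i))

/-- The extended Gray map `Φ(u | u') = (u | φ(u'))`. -/
def extGray {ι κ : Type} (v : (ι → Z2) × (κ → Z4)) : (ι → Z2) × ((κ ⊕ κ) → Z2) :=
  (v.1, gray v.2)

/-- Identification of `Z2^n` with `Z2[x]/(x^n-1)`. -/
def toQ2 {n : ℕ} (u : Fin n → Z2) : QR Z2 n :=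
  pmk n (∑ i, Polynomial.C (u i) * Polynomial.X ^ (i : ℕ))

/-- Identification of `Z4^n` with `Z4[x]/(x^n-1)`. -/
def toQ4 {n : ℕ} (u : Fin n → Z4) : QR Z4 n :=
  pmk n (∑ i, Polynomial.C (u i) * Polynomial.X ^ (i : ℕ))

/-- The standard polynomial identification of `Z2^α × Z4^β` with `R_{α,β}`. -/
def ident {α β : ℕ} (v : (Fin α → Z2) × (Fin β → Z4)) : QR Z2 α × QR Z4 β :=
  (toQ2 v.1, toQ4 v.2)

/-- Right cyclic shift: `(u_0,…,u_{n-1}) ↦ (u_{n-1},u_0,…,u_{n-2})`. -/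
def shiftR {n : ℕ} {R : Type} (u : Fin n → R) : Fin n → R :=
  fun i => u ((finRotate n).symm i)

/-- Simultaneous cyclic shift on both blocks of `Z2^α × Z4^β`. -/
def bshift {α β : ℕ} (v : (Fin α → Z2) × (Fin β → Z4)) : (Fin α → Z2) × (Fin β → Z4) :=
  (shiftR v.1, shiftR v.2)

/-- `IsTensorSquare n p q` says that `q = (p ⊗ p)`: `q` is the (monic) divisor of
`x^n - 1` in `Z2[x]` whose roots (in the splitting field of `x^n-1`) are exactly the
products of pairs of roots of `p`. -/
def IsTensorSquare (n : ℕ) (p q : Polynomial Z2) : Prop :=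
  q ∣ (Polynomial.X ^ n - 1) ∧ q.Monic ∧
    ∀ z : ((Polynomial.X : Polynomial Z2) ^ n - 1).SplittingField,
      Polynomial.aeval z q = 0 ↔
        ∃ z₁ z₂, Polynomial.aeval z₁ p = 0 ∧ Polynomial.aeval z₂ p = 0 ∧ z = z₁ * z₂

/-- The Nechaev permutation on `Z2^{2n}` (coordinates indexed by `Fin n ⊕ Fin n`,
with `inr i` standing for position `n + i`): it swaps positions `2i+1` and `n + 2i+1`. -/
def nechaev {n : ℕ} (v : (Fin n ⊕ Fin n) → Z2) : (Fin n ⊕ Fin n) → Z2 :=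
  Sum.elim (fun i => if Odd (i : ℕ) then v (Sum.inr i) else v (Sum.inl i))
    (fun i => if Odd (i : ℕ) then v (Sum.inl i) else v (Sum.inr i))

/-- The extended Nechaev–Gray map `Ψ(u | u') = (u | σ(φ(u')))`. -/
def nechaevGrayExt {α β : ℕ} (v : (Fin α → Z2) × (Fin β → Z4)) :
    (Fin α → Z2) × ((Fin β ⊕ Fin β) → Z2) :=
  (v.1, nechaev (gray v.2))

/-- Identification of `Z2^{2n}` (indexed by `Fin n ⊕ Fin n`) with `Z2[x]/(x^{2n}-1)`. -/
def toQ2D {n : ℕ} (w : (Fin n ⊕ Fin n) → Z2) : QR Z2 (2 * n) :=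
  pmk (2 * n) (∑ i : Fin n,
    (Polynomial.C (w (Sum.inl i)) * Polynomial.X ^ (i : ℕ) +
      Polynomial.C (w (Sum.inr i)) * Polynomial.X ^ (n + (i : ℕ))))

/-- Identification of `Z2^α × Z2^{2β}` with `Z2[x]/(x^α-1) × Z2[x]/(x^{2β}-1)`. -/
def pairD {α β : ℕ} (v : (Fin α → Z2) × ((Fin β ⊕ Fin β) → Z2)) :
    QR Z2 α × QR Z2 (2 * β) :=
  (toQ2 v.1, toQ2D v.2)

def leeWt (u : Z4) : ℕ := min u.val (4 - u.val)

def leeDist {n : ℕ} (u v : Fin n → Z4) : ℕ := ∑ i, leeWt (u i - v i)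

/-! The Gray map satisfies `φ u + φ v = φ (u + v + 2 (u ⋆ v))`, `⋆` the componentwise product,
so `Φ(C)` is linear as soon as `(0 | 2 (u ⋆ v)) ∈ C` for all codewords `(u' | u)`, `(v' | v)`.
Now `2 (u ⋆ v)` only depends on the reduction `ũ ⋆ ṽ`, and `ũ, ṽ` lie in the binary cyclic
code `⟨f̃ h̃⟩`. If that code is closed under `⋆`, then `ũ ⋆ ṽ = r̃ f̃ h̃` for some `r`, whence
`2 (u ⋆ v) = 2 r (f h + 2 f) ∈ C`. For `g = 1` the code `⟨f̃ h̃⟩ = ⟨x^β - 1⟩` is zero. For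
`g = x^s - 1` and `β = s k`, `f̃ h̃ = 1 + x^s + ⋯ + x^(s(k-1))`, whose multiples are exactly the
`s`-periodic words, and periodic words are closed under `⋆`. -/

lemma gray_add_add_two_mul {ι : Type} (u v : ι → Z4) :
    gray (u + v + 2 * (u * v)) = gray u + gray v := by
  have hat_eq : ∀ a b : Z4, hat (a + b + 2 * (a * b)) = hat a + hat b := by decide
  have til_eq : ∀ a b : Z4, til (a + b + 2 * (a * b)) = til a + til b := by decide
  ext (i | i) <;> simp [gray, hat_eq, til_eq, add_add_add_comm]

lemma extGray_add {ι κ : Type} (v w : (ι → Z2) × (κ → Z4)) :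
    extGray v + extGray w = extGray (v + w + (0, 2 * (v.2 * w.2))) := by
  simp [extGray, gray_add_add_two_mul]

lemma exists_submodule_coe_eq_image_extGray {ι κ : Type}
    (C : AddSubgroup ((ι → Z2) × (κ → Z4)))
    (hC : ∀ v ∈ C, ∀ w ∈ C, ((0 : ι → Z2), 2 * (v.2 * w.2)) ∈ C) :
    ∃ S : Submodule Z2 ((ι → Z2) × ((κ ⊕ κ) → Z2)),
      (S : Set _) = extGray '' (C : Set ((ι → Z2) × (κ → Z4))) := by
  let T : AddSubgroup ((ι → Z2) × ((κ ⊕ κ) → Z2)) :=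
    { carrier := extGray '' C
      zero_mem' := ⟨0, C.zero_mem, by ext <;> simp [extGray, gray, hat, til]⟩
      add_mem' := by
        rintro _ _ ⟨v, hv, rfl⟩ ⟨w, hw, rfl⟩
        exact ⟨_, C.add_mem (C.add_mem hv hw) (hC v hv w hw), (extGray_add v w).symm⟩
      neg_mem' := fun hx => by rwa [ZModModule.neg_eq_self] }
  exact ⟨AddSubgroup.toZModSubmodule 2 T, rfl⟩

section finPoly

variable {R : Type*} [Semiring R] {n : ℕ}

def finPoly (u : Fin n → R) : R[X] := ∑ i, C (u i) * X ^ (i : ℕ)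

lemma coeff_finPoly (u : Fin n → R) (j : ℕ) :
    (finPoly u).coeff j = if h : j < n then u ⟨j, h⟩ else 0 := by
  simp only [finPoly, finsetSum_coeff, coeff_C_mul_X_pow]
  split_ifs with h
  · rw [Finset.sum_eq_single ⟨j, h⟩] <;> simp +contextual [Fin.ext_iff, eq_comm]
  · exact Finset.sum_eq_zero fun i _ => if_neg (by omega)

lemma degree_finPoly_lt (u : Fin n → R) : (finPoly u).degree < n :=
  degree_sum_fin_lt u

lemma finPoly_add (u v : Fin n → R) : finPoly (u + v) = finPoly u + finPoly v := by
  simp [finPoly, add_mul, Finset.sum_add_distrib]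

lemma map_finPoly {S : Type*} [Semiring S] (φ : R →+* S) (u : Fin n → R) :
    (finPoly u).map φ = finPoly (φ ∘ u) := by
  simp [finPoly, Polynomial.map_sum]

lemma finPoly_eq_zero_iff {a : Fin n → R} : finPoly a = 0 ↔ a = 0 := by
  refine ⟨fun h => funext fun i => ?_, fun h => by simp [h, finPoly]⟩
  simpa [coeff_finPoly] using congrArg (coeff · i) h

lemma finPoly_two_mul (u : Fin n → R) : finPoly (2 * u) = 2 * finPoly u := by
  rw [two_mul, finPoly_add, two_mul]

end finPoly

section cyclic

open Finset

variable {R : Type*} [CommRing R]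

lemma coeff_geom_sum_X_pow_mul {s : ℕ} {r : R[X]} (hr : r.degree < s)
    (k i : ℕ) :
    ((∑ t ∈ range k, (X ^ s) ^ t) * r).coeff i = if i < s * k then r.coeff (i % s) else 0 := by
  induction k with
  | zero => simp
  | succ k ih =>
    rw [sum_range_succ, add_mul, coeff_add, ih, ← pow_mul, coeff_X_pow_mul', mul_add_one]
    by_cases h₁ : i < s * k
    · rw [if_pos h₁, if_neg (by omega), if_pos (by omega), add_zero]
    by_cases h₂ : i < s * k + s
    · have hmod : i % s = i - s * k := by
        rw [← Nat.sub_mul_mod (n := s) (k := k) (by omega), Nat.mod_eq_of_lt (by omega)]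
      rw [if_neg h₁, if_pos (by omega), if_pos h₂, zero_add, hmod]
    · rw [if_neg h₁, if_pos (by omega), if_neg h₂, zero_add]
      exact coeff_eq_zero_of_degree_lt (hr.trans_le (by norm_cast; omega))

lemma X_pow_mul_sub_one_eq_geom_sum_mul (s k : ℕ) :
    (X : R[X]) ^ (s * k) - 1 = (∑ t ∈ range k, (X ^ s) ^ t) * (X ^ s - 1) := by
  rw [geom_sum_mul, pow_mul]

lemma monic_X_pow_sub_one {n : ℕ} (hn : 0 < n) : ((X : R[X]) ^ n - 1).Monic := by
  simpa using monic_X_pow_sub_C (1 : R) hn.ne'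

variable [Nontrivial R]

lemma degree_X_pow_sub_one {n : ℕ} (hn : 0 < n) : ((X : R[X]) ^ n - 1).degree = n := by
  simpa using degree_X_pow_sub_C hn (1 : R)

lemma eq_of_X_pow_sub_one_dvd_sub {n : ℕ} (hn : 0 < n) {p q : R[X]} (hp : p.degree < n)
    (hq : q.degree < n) (h : X ^ n - 1 ∣ p - q) : p = q := by
  by_contra hne
  refine (monic_X_pow_sub_one hn).not_dvd_of_degree_lt (sub_ne_zero.mpr hne) ?_ h
  rw [degree_X_pow_sub_one hn]
  exact (degree_sub_le p q).trans_lt (max_lt hp hq)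

lemma exists_eq_geom_sum_mul_of_dvd {s k : ℕ} (hs : 0 < s) (hk : 0 < k) {p : R[X]}
    (hp : p.degree < ↑(s * k)) (h : (∑ t ∈ range k, (X ^ s) ^ t) ∣ p) :
    ∃ r : R[X], r.degree < s ∧ p = (∑ t ∈ range k, (X ^ s) ^ t) * r := by
  obtain ⟨d, rfl⟩ := h
  have hdeg : (d %ₘ (X ^ s - 1)).degree < s := by
    simpa [degree_X_pow_sub_one hs] using degree_modByMonic_lt d (monic_X_pow_sub_one (R := R) hs)
  refine ⟨d %ₘ (X ^ s - 1), hdeg, eq_of_X_pow_sub_one_dvd_sub (Nat.mul_pos hs hk) hp ?_ ?_⟩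
  · rw [degree_lt_iff_coeff_zero]
    intro i hi
    rw [coeff_geom_sum_X_pow_mul hdeg, if_neg (by omega)]
  · refine ⟨d /ₘ (X ^ s - 1), ?_⟩
    rw [X_pow_mul_sub_one_eq_geom_sum_mul]
    linear_combination (-∑ t ∈ range k, (X ^ s) ^ t) * modByMonic_add_div d (X ^ s - 1)

end cyclic

section schur

open Finset

variable {R : Type*} [CommRing R]

/-- The cyclic code `⟨p⟩ ⊆ R[x]/(x^n - 1)` is closed under the componentwise product of
codewords; a word `a` lies in `⟨p⟩` iff `finPoly a ∈ Ideal.span {X ^ n - 1, p}`. -/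
def IsSchurClosed (n : ℕ) (p : R[X]) : Prop :=
  ∀ a b : Fin n → R, finPoly a ∈ Ideal.span {X ^ n - 1, p} →
    finPoly b ∈ Ideal.span {X ^ n - 1, p} → finPoly (a * b) ∈ Ideal.span {X ^ n - 1, p}

lemma mem_span_X_pow_mul_sub_one_geom_sum_iff {s k : ℕ} {p : R[X]} :
    p ∈ Ideal.span {X ^ (s * k) - 1, ∑ t ∈ range k, (X ^ s) ^ t} ↔
      (∑ t ∈ range k, (X ^ s) ^ t) ∣ p := by
  rw [Ideal.span_insert, sup_eq_right.mpr, Ideal.mem_span_singleton]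
  rw [Ideal.span_singleton_le_span_singleton, X_pow_mul_sub_one_eq_geom_sum_mul]
  exact dvd_mul_right _ _

variable [Nontrivial R]

lemma isSchurClosed_X_pow_sub_one {n : ℕ} (hn : 0 < n) : IsSchurClosed n (X ^ n - 1 : R[X]) := by
  intro a b ha _
  rw [Set.pair_eq_singleton, Ideal.mem_span_singleton] at ha
  have ha0 : finPoly a = 0 :=
    eq_of_X_pow_sub_one_dvd_sub hn (degree_finPoly_lt a) (by simp) (by simpa using ha)
  rw [finPoly_eq_zero_iff.mp ha0, zero_mul, finPoly_eq_zero_iff.mpr rfl]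
  exact Ideal.zero_mem _

lemma isSchurClosed_geom_sum {s k : ℕ} (hs : 0 < s) (hk : 0 < k) :
    IsSchurClosed (s * k) (∑ t ∈ range k, (X ^ s) ^ t : R[X]) := by
  have periodic {c : Fin (s * k) → R} {r : R[X]} (hr : r.degree < s)
      (h : finPoly c = (∑ t ∈ range k, (X ^ s) ^ t) * r) (i : Fin (s * k)) :
      c i = r.coeff (i % s) := by
    simpa [coeff_finPoly, coeff_geom_sum_X_pow_mul hr] using congrArg (coeff · i) h
  intro a b ha hb
  rw [mem_span_X_pow_mul_sub_one_geom_sum_iff] at ha hb ⊢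
  obtain ⟨ra, hra, ha⟩ := exists_eq_geom_sum_mul_of_dvd hs hk (degree_finPoly_lt a) ha
  obtain ⟨rb, hrb, hb⟩ := exists_eq_geom_sum_mul_of_dvd hs hk (degree_finPoly_lt b) hb
  refine ⟨finPoly fun j : Fin s => ra.coeff j * rb.coeff j, ext fun i => ?_⟩
  rw [coeff_geom_sum_X_pow_mul (degree_finPoly_lt _), coeff_finPoly, coeff_finPoly]
  by_cases hi : i < s * k
  · rw [dif_pos hi, if_pos hi, dif_pos (Nat.mod_lt i hs), Pi.mul_apply, periodic hra ha,
      periodic hrb hb]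
  · rw [dif_neg hi, if_neg hi]

end schur

lemma map_two_mul (p : Z4[X]) : (2 * p).map ρ = 0 := by
  rw [Polynomial.map_mul, show (2 : Z4[X]) = C 2 by rfl, map_C, show ρ 2 = 0 by decide, C_0,
    zero_mul]

lemma two_mul_eq_two_mul_of_map_eq {A B : Z4[X]} (h : A.map ρ = B.map ρ) : 2 * A = 2 * B := by
  have two_mul_eq : ∀ a b : Z4, ρ a = ρ b → 2 * a = 2 * b := by decide
  ext m
  simpa using two_mul_eq _ _ (by simpa using congrArg (coeff · m) h)

lemma finPoly_two_mul_mul_mem {n : ℕ} {F : Z4[X]} (hF : IsSchurClosed n (F.map ρ))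
    {u v : Fin n → Z4} (hu : finPoly u ∈ Ideal.span {X ^ n - 1, F})
    (hv : finPoly v ∈ Ideal.span {X ^ n - 1, F}) :
    finPoly (2 * (u * v)) ∈ Ideal.span {X ^ n - 1, 2 * F} := by
  have reduce {w : Fin n → Z4} (hw : finPoly w ∈ Ideal.span {X ^ n - 1, F}) :
      finPoly (ρ ∘ w) ∈ Ideal.span {X ^ n - 1, F.map ρ} := by
    simpa [← map_finPoly, Ideal.map_span, Set.image_pair] using
      Ideal.mem_map_of_mem (mapRingHom ρ) hw
  obtain ⟨c, d, hcd⟩ := Ideal.mem_span_pair.mp (hF _ _ (reduce hu) (reduce hv))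
  obtain ⟨c, rfl⟩ := map_surjective ρ (ZMod.castHom_surjective _) c
  obtain ⟨d, rfl⟩ := map_surjective ρ (ZMod.castHom_surjective _) d
  have hlift : (finPoly (u * v)).map ρ = (c * (X ^ n - 1) + d * F).map ρ := by
    have hmul : ρ ∘ (u * v) = ρ ∘ u * ρ ∘ v := funext fun i => map_mul ρ (u i) (v i)
    rw [map_finPoly, hmul, ← hcd]
    simp
  rw [finPoly_two_mul, two_mul_eq_two_mul_of_map_eq hlift, Ideal.mem_span_pair]
  exact ⟨2 * c, d, by ring⟩

lemma pmk_eq_pmk_iff {R : Type} [CommRing R] {n : ℕ} {p q : R[X]} :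
    pmk n p = pmk n q ↔ X ^ n - 1 ∣ p - q := by
  rw [pmk, pmk, Ideal.Quotient.eq, Ideal.mem_span_singleton]

lemma smul_pmk {n : ℕ} (p q : Z4[X]) : p • pmk n q = pmk n (p * q) := rfl

lemma smul_pmk_Z2 {n : ℕ} (p : Z4[X]) (q : Z2[X]) : p • pmk n q = pmk n (p.map ρ * q) := rfl

lemma ident_add {α β : ℕ} (v w : (Fin α → Z2) × (Fin β → Z4)) :
    ident (v + w) = ident v + ident w := by
  change (pmk α (finPoly (v.1 + w.1)), pmk β (finPoly (v.2 + w.2))) = _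
  rw [finPoly_add, finPoly_add]
  rfl

section code

variable {α β : ℕ} {b ℓ : Z2[X]} {F : Z4[X]}

lemma finPoly_mem_of_ident_mem {v : (Fin α → Z2) × (Fin β → Z4)}
    (hv : ident v ∈
      Submodule.span Z4[X] {((pmk α b : QR Z2 α), (0 : QR Z4 β)), (pmk α ℓ, pmk β F)}) :
    finPoly v.2 ∈ Ideal.span {X ^ β - 1, F} := by
  obtain ⟨p, q, hpq⟩ := Submodule.mem_span_pair.mp hv
  have hsnd : (ident v).2 = pmk β (q * F) := by
    simpa [smul_pmk] using (congrArg Prod.snd hpq).symm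
  obtain ⟨c, hc⟩ := pmk_eq_pmk_iff.mp (show pmk β (finPoly v.2) = _ from hsnd)
  exact Ideal.mem_span_pair.mpr ⟨c, q, by linear_combination -hc⟩

lemma ident_mem_of_finPoly_mem {w : Fin β → Z4} (hw : finPoly w ∈ Ideal.span {X ^ β - 1, 2 * F}) :
    ident ((0 : Fin α → Z2), w) ∈
      Submodule.span Z4[X] {((pmk α b : QR Z2 α), (0 : QR Z4 β)), (pmk α ℓ, pmk β F)} := by
  obtain ⟨c, d, hcd⟩ := Ideal.mem_span_pair.mp hw
  have hw : ident ((0 : Fin α → Z2), w) = (2 * d) • ((pmk α ℓ : QR Z2 α), pmk β F) := by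
    refine Prod.ext ?_ ?_
    · change pmk α (finPoly 0) = _
      rw [Prod.smul_fst, smul_pmk_Z2, map_two_mul, zero_mul, finPoly_eq_zero_iff.mpr rfl]
    · refine pmk_eq_pmk_iff.mpr ⟨c, ?_⟩
      change finPoly w - 2 * d * F = _
      linear_combination hcd.symm
  rw [hw]
  exact Submodule.smul_mem _ _ (Submodule.subset_span (by simp))

end code

lemma isSchurClosed_map_mul_add_two_mul {β : ℕ} (hβ : 0 < β) {f g h : Z4[X]}
    (hfgh : f * g * h = X ^ β - 1) (hg : g = 1 ∨ ∃ s : ℕ, s ∣ β ∧ g = X ^ s - 1) :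
    IsSchurClosed β ((f * h + 2 * f).map ρ) := by
  rw [Polynomial.map_add, map_two_mul, add_zero, Polynomial.map_mul]
  rcases hg with rfl | ⟨s, ⟨k, rfl⟩, rfl⟩
  · have hfh : f.map ρ * h.map ρ = X ^ β - 1 := by simpa using congrArg (map ρ) hfgh
    rw [hfh]
    exact isSchurClosed_X_pow_sub_one hβ
  · have hs : 0 < s := Nat.pos_of_mul_pos_right hβ
    have hk : 0 < k := Nat.pos_of_mul_pos_left hβ
    have hmap : f.map ρ * (X ^ s - 1) * h.map ρ = X ^ (s * k) - 1 := by
      simpa using congrArg (map ρ) hfgh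
    have hfh : f.map ρ * h.map ρ = ∑ t ∈ Finset.range k, (X ^ s) ^ t := by
      refine mul_right_cancel₀ (monic_X_pow_sub_one hs).ne_zero ?_
      rw [← X_pow_mul_sub_one_eq_geom_sum_mul, ← hmap]
      ring
    rw [hfh]
    exact isSchurClosed_geom_sum hs hk

theorem extGray_linear_of_g_general (α β : ℕ) (hβ : Odd β)
    (b ℓ : Polynomial Z2) (f g h : Polynomial Z4)
    (hfgh : f * g * h = Polynomial.X ^ β - 1)
    (hg : g = 1 ∨ ∃ s : ℕ, s ∣ β ∧ g = Polynomial.X ^ s - 1) :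
    ∃ S : Submodule Z2 ((Fin α → Z2) × ((Fin β ⊕ Fin β) → Z2)),
      (S : Set _) = extGray (ι := Fin α) (κ := Fin β) ''
        {v : (Fin α → Z2) × (Fin β → Z4) |
          ident v ∈ Submodule.span (Polynomial Z4)
            {((pmk α b : QR Z2 α), (0 : QR Z4 β)),
             (pmk α ℓ, pmk β (f * h + 2 * f))}} := by
  have hF := isSchurClosed_map_mul_add_two_mul hβ.pos hfgh hg
  let code := (Submodule.span Z4[X] {((pmk α b : QR Z2 α), (0 : QR Z4 β)),
    (pmk α ℓ, pmk β (f * h + 2 * f))}).toAddSubgroup.comap (AddMonoidHom.mk' ident ident_add)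
  exact exists_submodule_coe_eq_image_extGray code fun v hv w hw =>
    ident_mem_of_finPoly_mem <| finPoly_two_mul_mul_mem hF
      (finPoly_mem_of_ident_mem hv) (finPoly_mem_of_ident_mem hw)

/-- For `C = ⟨(b|0), (ℓ | fh+2f)⟩` with `β` odd and `fgh = x^β-1`, if
`g = 1` or `g = x^s - 1` with `s ∣ β`, then `Φ(C)` is a linear binary code. -/
theorem extGray_linear_of_g (α β : ℕ) (hβ : Odd β)
    (b ℓ : Polynomial Z2) (f g h : Polynomial Z4)
    (hb : b ∣ Polynomial.X ^ α - 1)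
    (hfgh : f * g * h = Polynomial.X ^ β - 1)
    (hg : g = 1 ∨ ∃ s : ℕ, s ∣ β ∧ g = Polynomial.X ^ s - 1) :
    ∃ S : Submodule Z2 ((Fin α → Z2) × ((Fin β ⊕ Fin β) → Z2)),
      (S : Set _) = extGray (ι := Fin α) (κ := Fin β) ''
        {v : (Fin α → Z2) × (Fin β → Z4) |
          ident v ∈ Submodule.span (Polynomial Z4)
            {((pmk α b : QR Z2 α), (0 : QR Z4 β)),
             (pmk α ℓ, pmk β (f * h + 2 * f))}} :=
  extGray_linear_of_g_general α β hβ b ℓ f g h hfgh hg
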